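/- Suppose v ∈ ℝ^S satisfies v_s ≥ r_{as} + β · max { Σ_{(s',z)∈S×Z} p(s',z) v_{s'} : p ∈ B_{as} } for every a ∈ A and s ∈ S (the optimistic fully-observable MDP inequalities), and let h : Δ(S) → ℝ be the linear function h(b) = Σ_{s∈S} b_s v_s. Then (Lh)(b) ≤ h(b) for every b ∈ Δ(S). In other words, the distributionally optimistic MDP value vector yields a supersolution of the distributionally robust Bellman operator, validating the HSVI upper-bound initialization. -/

import Mathlib

open MeasureTheory

section Defs

variable {S Z A : Type*}

/-- Observation weight `n_z(b,p) = Σ_s Σ_{s'} p_s(s',z) b_s`. -/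
def obsW [Fintype S] (b : S → ℝ) (p : S → (S × Z) → ℝ) (z : Z) : ℝ :=
  ∑ s, ∑ s', p s (s', z) * b s

/-- Bayesian belief update `f(b,p,z)`. -/
noncomputable def bUpd [Fintype S] (b : S → ℝ) (p : S → (S × Z) → ℝ) (z : Z) : S → ℝ :=
  fun s' => (∑ s, p s (s', z) * b s) / obsW b p z

/-- The support set `X̃_{as}`. -/
def XasSet [Fintype S] [Fintype Z] (pbar : (S × Z) → ℝ) :
    Set (((S × Z) → ℝ) × ((S × Z) → ℝ)) :=
  {x | (∀ i, x.1 i - pbar i ≤ x.2 i) ∧ (∀ i, pbar i - x.1 i ≤ x.2 i) ∧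
       x.1 ∈ stdSimplex ℝ (S × Z)}

/-- The box uncertainty set `B_{as}`. -/
def BasSet [Fintype S] [Fintype Z] (pbar c : (S × Z) → ℝ) : Set ((S × Z) → ℝ) :=
  {p | p ∈ stdSimplex ℝ (S × Z) ∧ ∀ i, |p i - pbar i| ≤ c i}

/-- The ambiguity set `D̃_{as}`. -/
def DasSet [Fintype S] [Fintype Z] (pbar c : (S × Z) → ℝ) :
    Set (Measure (((S × Z) → ℝ) × ((S × Z) → ℝ))) :=
  {μ | IsProbabilityMeasure μ ∧ μ (XasSet pbar) = 1 ∧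
       Integrable (fun x => x.2) μ ∧ (∫ x, x.2 ∂μ) = c}

/-- The product ambiguity set `D̃_a = ⊗_s D̃_{as}`. -/
def DaSet [Fintype S] [Fintype Z] (pbar c : S → (S × Z) → ℝ) :
    Set (Measure (S → ((S × Z) → ℝ) × ((S × Z) → ℝ))) :=
  {μ | ∃ ν : S → Measure (((S × Z) → ℝ) × ((S × Z) → ℝ)),
    (∀ s, ν s ∈ DasSet (pbar s) (c s)) ∧ μ = Measure.pi ν}

/-- The term `n_z(b,p) V(f(b,p,z))`, with the convention that it is `0` when `n_z(b,p) = 0`. -/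
noncomputable def bTerm [Fintype S] (V : (S → ℝ) → ℝ) (b : S → ℝ)
    (p : S → (S × Z) → ℝ) (z : Z) : ℝ :=
  if obsW b p z = 0 then 0 else obsW b p z * V (bUpd b p z)

/-- `U_V(b,a,μ̃)`. -/
noncomputable def UVal [Fintype S] [Fintype Z] (r : A → S → ℝ) (β : ℝ)
    (V : (S → ℝ) → ℝ) (b : S → ℝ) (a : A)
    (μ : Measure (S → ((S × Z) → ℝ) × ((S × Z) → ℝ))) : ℝ :=
  ∫ x, ((∑ s, b s * r a s) + β * ∑ z, bTerm V b (fun s => (x s).1) z) ∂μ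

/-- The distributionally robust Bellman operator `L`. -/
noncomputable def Lop [Fintype S] [Fintype Z] [Fintype A]
    (pbar c : A → S → (S × Z) → ℝ) (r : A → S → ℝ) (β : ℝ)
    (V : (S → ℝ) → ℝ) (b : S → ℝ) : ℝ :=
  ⨆ a : A, sInf ((fun μ => UVal r β V b a μ) '' DaSet (pbar a) (c a))

end Defs

/-!
Take the point mass at the nominal model `(p̄_{as}, c_{as})` in every state: it lies in each
ambiguity set, so the infimum over `D̃_a` is at most the value there. For the linear function
`h` the Bayesian update cancels against the observation weight, so this value is
`Σ_s b_s (r_{as} + β ⟨p̄_{as}, v⟩)`, and `p̄_{as} ∈ B_{as}` makes each bracket at most `v_s`.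
The infimum is a genuine one (not the junk value of an unbounded set) because the integrand is
a convex combination of bounded quantities almost surely.
-/

theorem MeasureTheory.Measure.pi_dirac {ι : Type*} [Fintype ι] {α : ι → Type*}
    [∀ i, MeasurableSpace (α i)] (x : ∀ i, α i) :
    Measure.pi (fun i => Measure.dirac (x i)) = Measure.dirac x := by
  refine Measure.pi_eq fun s hs => ?_
  classical
  simp [Measure.dirac_apply' _ (MeasurableSet.univ_pi hs), Measure.dirac_apply' _ (hs _),
    Set.indicator_apply, Finset.prod_boole]

lemma abs_sum_mul_le_of_mem_stdSimplex {ι : Type*} [Fintype ι] {w y : ι → ℝ} {C : ℝ}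
    (hw : w ∈ stdSimplex ℝ ι) (hy : ∀ i, |y i| ≤ C) : |∑ i, w i * y i| ≤ C :=
  calc |∑ i, w i * y i| ≤ ∑ i, |w i * y i| := Finset.abs_sum_le_sum_abs _ _
    _ = ∑ i, w i * |y i| := by simp only [abs_mul, abs_of_nonneg (hw.1 _)]
    _ ≤ ∑ i, w i * C := by gcongr with i; exacts [hw.1 i, hy i]
    _ = C := by rw [← Finset.sum_mul, hw.2, one_mul]

section LinearValue

variable {S Z : Type*} [Fintype S] (v : S → ℝ) {b : S → ℝ} {p : S → (S × Z) → ℝ}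

lemma bTerm_linear (hb : ∀ s, 0 ≤ b s) (hp : ∀ s i, 0 ≤ p s i) (z : Z) :
    bTerm (fun b' => ∑ s, b' s * v s) b p z = ∑ s', (∑ s, p s (s', z) * b s) * v s' := by
  have hterm : ∀ s', 0 ≤ ∑ s, p s (s', z) * b s := fun s' =>
    Finset.sum_nonneg fun s _ => mul_nonneg (hp s _) (hb s)
  unfold bTerm bUpd
  split_ifs with h0
  · -- a null observation weight is a sum of nonnegative numerators, so all of them vanish
    rw [obsW, Finset.sum_comm, Finset.sum_eq_zero_iff_of_nonneg fun s' _ => hterm s'] at h0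
    simp [h0]
  · rw [Finset.mul_sum]
    refine Finset.sum_congr rfl fun s' _ => ?_
    field_simp

lemma linear_bellman_integrand_eq [Fintype Z] (r : S → ℝ) (β : ℝ) (hb : ∀ s, 0 ≤ b s)
    (hp : ∀ s i, 0 ≤ p s i) :
    (∑ s, b s * r s) + β * ∑ z, bTerm (fun b' => ∑ s, b' s * v s) b p z
      = ∑ s, b s * (r s + β * ∑ i : S × Z, p s i * v i.1) := by
  have hobs : ∑ z, bTerm (fun b' => ∑ s, b' s * v s) b p z
      = ∑ s, b s * ∑ i : S × Z, p s i * v i.1 := by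
    simp only [bTerm_linear v hb hp, Finset.sum_mul, Finset.mul_sum]
    rw [← Fintype.sum_prod_type_right', Finset.sum_comm]
    exact Finset.sum_congr rfl fun s _ => Finset.sum_congr rfl fun i _ => by ring
  rw [hobs, Finset.mul_sum, ← Finset.sum_add_distrib]
  exact Finset.sum_congr rfl fun s _ => by ring

end LinearValue

section Ambiguity

variable {S Z A : Type*} [Fintype S] [Fintype Z]

lemma measurableSet_XasSet (pbar : (S × Z) → ℝ) : MeasurableSet (XasSet pbar) := by
  simp only [XasSet, Set.ofPred_and, Set.ofPred_forall]
  exact .inter (.iInter fun i => measurableSet_le (by fun_prop) (by fun_prop))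
    (.inter (.iInter fun i => measurableSet_le (by fun_prop) (by fun_prop))
      (measurable_fst (isClosed_stdSimplex ℝ _).measurableSet))

lemma ae_mem_XasSet {pbar c : S → (S × Z) → ℝ}
    {μ : Measure (S → ((S × Z) → ℝ) × ((S × Z) → ℝ))} (hμ : μ ∈ DaSet pbar c) : ∀ᵐ x ∂μ, ∀ s, x s ∈ XasSet (pbar s) := by
  obtain ⟨ν, hν, rfl⟩ := hμ
  have := fun s => (hν s).1
  refine ae_all_iff.2 fun s => Measure.tendsto_eval_ae_ae.eventually ?_
  exact (mem_ae_iff_prob_eq_one (measurableSet_XasSet _)).2 (hν s).2.1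

lemma dirac_mem_DasSet {pbar c : (S × Z) → ℝ} (hpbar : pbar ∈ stdSimplex ℝ (S × Z))
    (hc : 0 ≤ c) : Measure.dirac (pbar, c) ∈ DasSet pbar c := by
  refine ⟨inferInstance, Measure.dirac_apply_of_mem ⟨fun i => ?_, fun i => ?_, hpbar⟩,
    integrable_dirac (by simp), integral_dirac _ _⟩ <;> simpa using hc i

lemma abs_UVal_linear_le (r : A → S → ℝ) (β : ℝ) (v : S → ℝ) {b : S → ℝ}
    (hb : b ∈ stdSimplex ℝ S) (a : A) {pbar c : S → (S × Z) → ℝ}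
    {μ : Measure (S → ((S × Z) → ℝ) × ((S × Z) → ℝ))} (hμ : μ ∈ DaSet pbar c) :
    |UVal r β (fun b' => ∑ s, b' s * v s) b a μ| ≤ ‖r a‖ + |β| * ‖v‖ := by
  have : IsProbabilityMeasure μ := by
    obtain ⟨ν, hν, rfl⟩ := hμ
    have := fun s => (hν s).1
    infer_instance
  rw [UVal, ← Real.norm_eq_abs]
  refine (norm_integral_le_of_norm_le_const (C := ‖r a‖ + |β| * ‖v‖) ?_).trans_eq (by simp)
  filter_upwards [ae_mem_XasSet hμ] with x hx
  rw [Real.norm_eq_abs, linear_bellman_integrand_eq v _ _ hb.1 fun s => (hx s).2.2.1]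
  refine abs_sum_mul_le_of_mem_stdSimplex hb fun s => ?_
  calc |r a s + β * ∑ i, (x s).1 i * v i.1| ≤ |r a s| + |β| * |∑ i, (x s).1 i * v i.1| := by
        rw [← abs_mul]; exact abs_add_le _ _
    _ ≤ ‖r a‖ + |β| * ‖v‖ := by
        gcongr
        · exact norm_le_pi_norm (r a) s
        · exact abs_sum_mul_le_of_mem_stdSimplex (hx s).2.2 fun i => norm_le_pi_norm v i.1

lemma le_sSup_BasSet {pbar c : (S × Z) → ℝ} (hpbar : pbar ∈ stdSimplex ℝ (S × Z)) (hc : 0 ≤ c)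
    (v : S → ℝ) :
    ∑ i, pbar i * v i.1 ≤ sSup ((fun p => ∑ i : S × Z, p i * v i.1) '' BasSet pbar c) := by
  refine le_csSup ⟨‖v‖, ?_⟩ ⟨pbar, ⟨hpbar, fun i => by simpa using hc i⟩, rfl⟩
  rintro _ ⟨p, hp, rfl⟩
  exact (le_abs_self _).trans
    (abs_sum_mul_le_of_mem_stdSimplex hp.1 fun i => norm_le_pi_norm v i.1)

end Ambiguity

theorem hsvi_upper_bound_init_general {S Z A : Type*} [Fintype S]
    [Fintype Z] [Fintype A] [Nonempty A]
    (pbar c : A → S → (S × Z) → ℝ)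
    (hpbar : ∀ a s, pbar a s ∈ stdSimplex ℝ (S × Z))
    (hc : ∀ a s i, 0 ≤ c a s i)
    (r : A → S → ℝ) (β : ℝ) (hβ0 : 0 < β)
    (v : S → ℝ)
    (hv : ∀ a s, r a s + β * sSup ((fun p => ∑ i : S × Z, p i * v i.1) ''
        BasSet (pbar a s) (c a s)) ≤ v s) :
    ∀ b ∈ stdSimplex ℝ S,
      Lop pbar c r β (fun b' => ∑ s, b' s * v s) b ≤ ∑ s, b s * v s := by
  intro b hb
  refine ciSup_le fun a => ?_
  set nominal := Measure.dirac fun s => (pbar a s, c a s)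
  have h_mem : nominal ∈ DaSet (pbar a) (c a) :=
    ⟨_, fun s => dirac_mem_DasSet (hpbar a s) (hc a s), (Measure.pi_dirac _).symm⟩
  have h_bdd : BddBelow ((fun μ => UVal r β (fun b' => ∑ s, b' s * v s) b a μ) ''
      DaSet (pbar a) (c a)) := by
    refine ⟨-(‖r a‖ + |β| * ‖v‖), ?_⟩
    rintro _ ⟨μ, hμ, rfl⟩
    exact neg_le_of_abs_le (abs_UVal_linear_le r β v hb a hμ)
  calc _ ≤ UVal r β (fun b' => ∑ s, b' s * v s) b a nominal := csInf_le h_bdd ⟨_, h_mem, rfl⟩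
    _ = ∑ s, b s * (r a s + β * ∑ i : S × Z, pbar a s i * v i.1) := by
        rw [UVal, integral_dirac,
          linear_bellman_integrand_eq v _ _ hb.1 fun s => (hpbar a s).1]
    _ ≤ ∑ s, b s * v s := by
        gcongr with s
        · exact hb.1 s
        · refine le_trans ?_ (hv a s)
          gcongr
          exact le_sSup_BasSet (hpbar a s) (hc a s) v

/-- if `v ∈ ℝ^S` satisfies the optimistic fully-observable MDP inequalities
`v_s ≥ r_{as} + β · max { Σ_{(s',z)} p(s',z) v_{s'} : p ∈ B_{as} }` for all `a, s`, then the
linear function `h(b) = Σ_s b_s v_s` is a supersolution of the distributionally robust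
Bellman operator: `(Lh)(b) ≤ h(b)` on `Δ(S)`.  This validates the HSVI upper-bound
initialization. -/
theorem hsvi_upper_bound_init {S Z A : Type*} [Fintype S] [Nonempty S]
    [Fintype Z] [Nonempty Z] [Fintype A] [Nonempty A]
    (pbar c : A → S → (S × Z) → ℝ)
    (hpbar : ∀ a s, pbar a s ∈ stdSimplex ℝ (S × Z))
    (hc : ∀ a s i, 0 ≤ c a s i)
    (r : A → S → ℝ) (β : ℝ) (hβ0 : 0 < β) (hβ1 : β < 1)
    (v : S → ℝ)
    (hv : ∀ a s, r a s + β * sSup ((fun p => ∑ i : S × Z, p i * v i.1) ''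
        BasSet (pbar a s) (c a s)) ≤ v s) :
    ∀ b ∈ stdSimplex ℝ S,
      Lop pbar c r β (fun b' => ∑ s, b' s * v s) b ≤ ∑ s, b s * v s :=
  hsvi_upper_bound_init_general pbar c hpbar hc r β hβ0 v hv
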